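/- Let 0 < α < ∞ and φ be a holomorphic self-map of D. Then C_φ : HB₀(α) → HB₀(α) is bounded if and only if φ belongs to the holomorphic little α-Bloch space B₀(α) and sup_{z∈D} (1-|z|²)^α |φ'(z)| / (1-|φ(z)|²)^α < ∞. -/

import Mathlib

/-!
For holomorphic `φ` the Wirtinger derivatives obey `(f ∘ φ)_z = f_z(φ) φ'` and
`(f ∘ φ)_z̄ = f_z̄(φ) conj φ'`, so the α-Bloch weight of `f ∘ φ` at `z` is `τ_{φ,α}(z)` times the
weight of `f` at `φ(z)`. Sufficiency: this bounds the seminorm of `f ∘ φ` by `sup τ` times that of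
`f`, the mean value inequality controls `f(φ(0))`, and the weight of `f ∘ φ` tends to `0` at the
boundary because `f ∈ HB₀(α)` where `|φ(z)|` is close to `1`, and because `φ ∈ B₀(α)` elsewhere.
Necessity: `φ = C_φ(id) ∈ HB₀(α)`, which bounds `τ` where `|φ(z)| ≤ 1/2`; where `|φ(z)| > 1/2`,
test against `f_w(z) = (1 - |w|²)(1 - w̄z)^(-α)` with `w = φ(z)`, whose norms are bounded uniformly
in `w` and whose weight at `w` is `α|w|`.
-/

open Complex Metric Set Filter Topology

noncomputable section

/-- The open unit disk in ℂ. -/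
def unitDisk : Set ℂ := Metric.ball 0 1

/-- Wirtinger derivative f_z = (1/2)(f_x - i f_y). -/
def wZ (f : ℂ → ℂ) (z : ℂ) : ℂ :=
  (1/2) * (fderiv ℝ f z 1 - Complex.I * fderiv ℝ f z Complex.I)

/-- Wirtinger derivative f_z̄ = (1/2)(f_x + i f_y). -/
def wZbar (f : ℂ → ℂ) (z : ℂ) : ℂ :=
  (1/2) * (fderiv ℝ f z 1 + Complex.I * fderiv ℝ f z Complex.I)

/-- f is harmonic on the disk: canonical decomposition f = h + conj g with h, g holomorphic. -/
def HarmonicDisk (f : ℂ → ℂ) : Prop :=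
  ∃ h g : ℂ → ℂ, DifferentiableOn ℂ h unitDisk ∧ DifferentiableOn ℂ g unitDisk ∧
    ∀ z ∈ unitDisk, f z = h z + (starRingEnd ℂ) (g z)

/-- The weight (1-|z|²)^α (|f_z(z)| + |f_z̄(z)|). -/
def weight (α : ℝ) (f : ℂ → ℂ) (z : ℂ) : ℝ :=
  (1 - ‖z‖ ^ 2) ^ α * (‖wZ f z‖ + ‖wZbar f z‖)

/-- The Bloch seminorm sup_{z ∈ D} weight α f z. -/
def semiNorm (α : ℝ) (f : ℂ → ℂ) : ℝ := sSup (weight α f '' unitDisk)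

/-- The HB(α) norm. -/
def HBnorm (α : ℝ) (f : ℂ → ℂ) : ℝ := ‖f 0‖ + semiNorm α f

/-- Membership in the harmonic α-Bloch space HB(α). -/
def memHB (α : ℝ) (f : ℂ → ℂ) : Prop :=
  HarmonicDisk f ∧ BddAbove (weight α f '' unitDisk)

/-- The little-oh condition: weight α f z → 0 as |z| → 1. -/
def littleOh (α : ℝ) (f : ℂ → ℂ) : Prop :=
  ∀ ε > 0, ∃ r < (1:ℝ), ∀ z ∈ unitDisk, r < ‖z‖ → weight α f z < ε

/-- Membership in the harmonic little α-Bloch space HB₀(α). -/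
def memHB0 (α : ℝ) (f : ℂ → ℂ) : Prop := memHB α f ∧ littleOh α f

/-- τ_{φ,α}(z) = (1-|z|²)^α |φ'(z)| / (1-|φ(z)|²)^α. -/
def tau (α : ℝ) (φ : ℂ → ℂ) (z : ℂ) : ℝ :=
  (1 - ‖z‖ ^ 2) ^ α * ‖deriv φ z‖ / (1 - ‖φ z‖ ^ 2) ^ α


open ComplexConjugate

lemma fderiv_apply_eq_wZ_add_wZbar (f : ℂ → ℂ) (z v : ℂ) :
    fderiv ℝ f z v = wZ f z * v + wZbar f z * conj v := by
  have hv : v = v.re • (1 : ℂ) + v.im • I := by rw [real_smul, real_smul, mul_one, re_add_im]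
  conv_lhs => rw [hv, map_add, map_smul, map_smul]
  conv_rhs => rw [← re_add_im v]
  simp only [wZ, wZbar, real_smul, map_add, map_mul, conj_ofReal, conj_I]
  ring_nf
  rw [I_sq]
  ring

lemma fderiv_real_apply_of_differentiableAt {h : ℂ → ℂ} {z : ℂ} (hh : DifferentiableAt ℂ h z)
    (v : ℂ) : fderiv ℝ h z v = deriv h z * v := by
  rw [(hh.hasDerivAt.hasFDerivAt.restrictScalars ℝ).fderiv]
  simp only [ContinuousLinearMap.coe_restrictScalars', ContinuousLinearMap.toSpanSingleton_apply,
    smul_eq_mul, mul_comm]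

lemma wZ_eq_and_wZbar_eq_of_fderiv_apply {f : ℂ → ℂ} {z a b : ℂ}
    (hf : ∀ v, fderiv ℝ f z v = a * v + b * conj v) : wZ f z = a ∧ wZbar f z = b := by
  simp only [wZ, wZbar, hf, map_one, conj_I]
  constructor <;> ring_nf <;> rw [I_sq] <;> ring

lemma norm_fderiv_le_norm_wZ_add_norm_wZbar (f : ℂ → ℂ) (z : ℂ) :
    ‖fderiv ℝ f z‖ ≤ ‖wZ f z‖ + ‖wZbar f z‖ :=
  ContinuousLinearMap.opNorm_le_bound _ (by positivity) fun v => by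
    rw [fderiv_apply_eq_wZ_add_wZbar, add_mul]
    refine (norm_add_le _ _).trans_eq ?_
    rw [norm_mul, norm_mul, Complex.norm_conj]

lemma wZ_eq_deriv_and_wZbar_eq_zero {h : ℂ → ℂ} {z : ℂ} (hh : DifferentiableAt ℂ h z) :
    wZ h z = deriv h z ∧ wZbar h z = 0 :=
  wZ_eq_and_wZbar_eq_of_fderiv_apply fun v => by
    rw [fderiv_real_apply_of_differentiableAt hh, zero_mul, add_zero]

lemma wZ_comp_and_wZbar_comp {f φ : ℂ → ℂ} {z : ℂ} (hf : DifferentiableAt ℝ f (φ z))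
    (hφ : DifferentiableAt ℂ φ z) :
    wZ (f ∘ φ) z = wZ f (φ z) * deriv φ z ∧
      wZbar (f ∘ φ) z = wZbar f (φ z) * conj (deriv φ z) :=
  wZ_eq_and_wZbar_eq_of_fderiv_apply fun v => by
    rw [fderiv_comp z hf (hφ.restrictScalars ℝ), ContinuousLinearMap.comp_apply,
      fderiv_real_apply_of_differentiableAt hφ, fderiv_apply_eq_wZ_add_wZbar, map_mul]
    ring

lemma mem_unitDisk {z : ℂ} : z ∈ unitDisk ↔ ‖z‖ < 1 := mem_ball_zero_iff

lemma isOpen_unitDisk : IsOpen unitDisk := isOpen_ball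

lemma zero_mem_unitDisk : (0 : ℂ) ∈ unitDisk := mem_ball_self one_pos

lemma one_sub_norm_sq_pos {z : ℂ} (hz : z ∈ unitDisk) : 0 < 1 - ‖z‖ ^ 2 := by
  have := mem_unitDisk.1 hz
  nlinarith [norm_nonneg z]

lemma HarmonicDisk.differentiableAt {f : ℂ → ℂ} (hf : HarmonicDisk f) {z : ℂ}
    (hz : z ∈ unitDisk) : DifferentiableAt ℝ f z := by
  obtain ⟨h, g, hh, hg, hfe⟩ := hf
  have hD : unitDisk ∈ 𝓝 z := isOpen_unitDisk.mem_nhds hz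
  refine DifferentiableAt.congr_of_eventuallyEq ?_ (eventually_of_mem hD hfe)
  exact ((hh.differentiableAt hD).restrictScalars ℝ).add
    (conjCLE.differentiableAt.comp z ((hg.differentiableAt hD).restrictScalars ℝ))

lemma HarmonicDisk.comp {f φ : ℂ → ℂ} (hf : HarmonicDisk f) (hφd : DifferentiableOn ℂ φ unitDisk)
    (hφm : MapsTo φ unitDisk unitDisk) : HarmonicDisk (f ∘ φ) := by
  obtain ⟨h, g, hh, hg, hfe⟩ := hf
  exact ⟨h ∘ φ, g ∘ φ, hh.comp hφd hφm, hg.comp hφd hφm, fun z hz => hfe (φ z) (hφm hz)⟩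

lemma harmonicDisk_of_differentiableOn {h : ℂ → ℂ} (hh : DifferentiableOn ℂ h unitDisk) :
    HarmonicDisk h :=
  ⟨h, 0, hh, differentiableOn_const 0, fun z _ => by simp⟩

section Weight

variable {α : ℝ}

lemma weight_nonneg {f : ℂ → ℂ} {z : ℂ} (hz : z ∈ unitDisk) : 0 ≤ weight α f z :=
  mul_nonneg (Real.rpow_nonneg (one_sub_norm_sq_pos hz).le α) (by positivity)

lemma weight_eq_of_differentiableAt {h : ℂ → ℂ} {z : ℂ} (hh : DifferentiableAt ℂ h z) :
    weight α h z = (1 - ‖z‖ ^ 2) ^ α * ‖deriv h z‖ := by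
  obtain ⟨hwZ, hwZbar⟩ := wZ_eq_deriv_and_wZbar_eq_zero hh
  rw [weight, hwZ, hwZbar, norm_zero, add_zero]

lemma tau_eq_weight_div {φ : ℂ → ℂ} {z : ℂ} (hφ : DifferentiableAt ℂ φ z) :
    tau α φ z = weight α φ z / (1 - ‖φ z‖ ^ 2) ^ α := by
  rw [tau, weight_eq_of_differentiableAt hφ]

lemma tau_nonneg {φ : ℂ → ℂ} {z : ℂ} (hz : z ∈ unitDisk) (hφz : φ z ∈ unitDisk) :
    0 ≤ tau α φ z :=
  div_nonneg (mul_nonneg (Real.rpow_nonneg (one_sub_norm_sq_pos hz).le α) (norm_nonneg _))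
    (Real.rpow_nonneg (one_sub_norm_sq_pos hφz).le α)

lemma weight_comp {f φ : ℂ → ℂ} {z : ℂ} (hf : DifferentiableAt ℝ f (φ z))
    (hφ : DifferentiableAt ℂ φ z) (hφz : φ z ∈ unitDisk) :
    weight α (f ∘ φ) z = tau α φ z * weight α f (φ z) := by
  obtain ⟨hwZ, hwZbar⟩ := wZ_comp_and_wZbar_comp hf hφ
  have hpos : 0 < (1 - ‖φ z‖ ^ 2) ^ α := Real.rpow_pos_of_pos (one_sub_norm_sq_pos hφz) α
  rw [weight, weight, tau, hwZ, hwZbar, norm_mul, norm_mul, Complex.norm_conj]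
  field_simp

lemma weight_le_semiNorm {f : ℂ → ℂ} (hb : BddAbove (weight α f '' unitDisk)) {z : ℂ}
    (hz : z ∈ unitDisk) : weight α f z ≤ semiNorm α f :=
  le_csSup hb (mem_image_of_mem _ hz)

lemma semiNorm_nonneg {f : ℂ → ℂ} (hb : BddAbove (weight α f '' unitDisk)) :
    0 ≤ semiNorm α f :=
  (weight_nonneg zero_mem_unitDisk).trans (weight_le_semiNorm hb zero_mem_unitDisk)

lemma semiNorm_le {f : ℂ → ℂ} {B : ℝ} (hB : ∀ z ∈ unitDisk, weight α f z ≤ B) :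
    semiNorm α f ≤ B :=
  csSup_le (nonempty_of_mem zero_mem_unitDisk |>.image _) (forall_mem_image.2 hB)

lemma norm_fderiv_le_semiNorm_div {f : ℂ → ℂ} (hb : BddAbove (weight α f '' unitDisk)) {z : ℂ}
    (hz : z ∈ unitDisk) : ‖fderiv ℝ f z‖ ≤ semiNorm α f / (1 - ‖z‖ ^ 2) ^ α := by
  have hpos : 0 < (1 - ‖z‖ ^ 2) ^ α := Real.rpow_pos_of_pos (one_sub_norm_sq_pos hz) α
  rw [le_div_iff₀ hpos, mul_comm]
  calc (1 - ‖z‖ ^ 2) ^ α * ‖fderiv ℝ f z‖ ≤ weight α f z :=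
        mul_le_mul_of_nonneg_left (norm_fderiv_le_norm_wZ_add_norm_wZbar f z) hpos.le
    _ ≤ semiNorm α f := weight_le_semiNorm hb hz

lemma HarmonicDisk.norm_sub_le {f : ℂ → ℂ} (hα : 0 ≤ α) (hf : HarmonicDisk f)
    (hb : BddAbove (weight α f '' unitDisk)) {w : ℂ} (hw : w ∈ unitDisk) :
    ‖f w - f 0‖ ≤ semiNorm α f / (1 - ‖w‖ ^ 2) ^ α * ‖w‖ := by
  have hsub : closedBall (0 : ℂ) ‖w‖ ⊆ unitDisk := closedBall_subset_ball (mem_unitDisk.1 hw)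
  have hbound : ∀ x ∈ closedBall (0 : ℂ) ‖w‖,
      ‖fderiv ℝ f x‖ ≤ semiNorm α f / (1 - ‖w‖ ^ 2) ^ α := by
    intro x hx
    have hxw : ‖x‖ ≤ ‖w‖ := mem_closedBall_zero_iff.1 hx
    refine (norm_fderiv_le_semiNorm_div hb (hsub hx)).trans ?_
    refine div_le_div_of_nonneg_left (semiNorm_nonneg hb)
      (Real.rpow_pos_of_pos (one_sub_norm_sq_pos hw) α) ?_
    exact Real.rpow_le_rpow (one_sub_norm_sq_pos hw).le (by nlinarith [norm_nonneg x]) hα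
  simpa using (convex_closedBall (0 : ℂ) ‖w‖).norm_image_sub_le_of_norm_fderiv_le
    (fun x hx => hf.differentiableAt (hsub hx)) hbound
    (mem_closedBall_self (norm_nonneg w)) (mem_closedBall_zero_iff.2 le_rfl)

lemma exists_forall_rpow_one_sub_norm_sq_lt (hα : 0 < α) {ε : ℝ} (hε : 0 < ε) :
    ∃ r < 1, ∀ z ∈ unitDisk, r < ‖z‖ → (1 - ‖z‖ ^ 2) ^ α < ε := by
  have hcont : ContinuousAt (fun t : ℝ => (1 - t ^ 2) ^ α) 1 :=
    ((continuous_const.sub (continuous_pow 2)).continuousAt).rpow_const (Or.inr hα.le)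
  have hlim : ∀ᶠ t in 𝓝 (1 : ℝ), (1 - t ^ 2) ^ α < ε := by
    refine hcont.eventually (gt_mem_nhds ?_)
    simpa [Real.zero_rpow hα.ne'] using hε
  obtain ⟨δ, hδ, hδε⟩ := Metric.eventually_nhds_iff.1 hlim
  refine ⟨1 - δ, by linarith, fun z hz hrz => hδε ?_⟩
  rw [Real.dist_eq, abs_sub_lt_iff]
  constructor <;> linarith [mem_unitDisk.1 hz]

lemma memHB0_of_norm_deriv_le (hα : 0 < α) {h : ℂ → ℂ} (hh : DifferentiableOn ℂ h unitDisk)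
    {D : ℝ} (hD : ∀ z ∈ unitDisk, ‖deriv h z‖ ≤ D) : memHB0 α h := by
  have hD0 : 0 ≤ D := (norm_nonneg _).trans (hD 0 zero_mem_unitDisk)
  have hweight : ∀ z ∈ unitDisk, weight α h z ≤ (1 - ‖z‖ ^ 2) ^ α * D := fun z hz => by
    rw [weight_eq_of_differentiableAt (hh.differentiableAt (isOpen_unitDisk.mem_nhds hz))]
    exact mul_le_mul_of_nonneg_left (hD z hz) (Real.rpow_nonneg (one_sub_norm_sq_pos hz).le α)
  refine ⟨⟨harmonicDisk_of_differentiableOn hh, D, forall_mem_image.2 fun z hz => ?_⟩, ?_⟩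
  · refine (hweight z hz).trans (mul_le_of_le_one_left hD0 ?_)
    exact Real.rpow_le_one (one_sub_norm_sq_pos hz).le (by nlinarith [norm_nonneg z]) hα.le
  · intro ε hε
    obtain ⟨r, hr, hsmall⟩ :=
      exists_forall_rpow_one_sub_norm_sq_lt hα (by positivity : 0 < ε / (D + 1))
    refine ⟨r, hr, fun z hz hrz => (hweight z hz).trans_lt ?_⟩
    calc (1 - ‖z‖ ^ 2) ^ α * D ≤ (1 - ‖z‖ ^ 2) ^ α * (D + 1) := by
          gcongr
          · exact Real.rpow_nonneg (one_sub_norm_sq_pos hz).le α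
          · linarith
      _ < ε / (D + 1) * (D + 1) := by gcongr; exact hsmall z hz hrz
      _ = ε := div_mul_cancel₀ ε (by positivity)

lemma memHB0_id (hα : 0 < α) : memHB0 α id :=
  memHB0_of_norm_deriv_le hα differentiableOn_id (D := 1) fun z _ => by simp

end Weight

section TestFunction

variable {α : ℝ} {w z : ℂ}

def blochTestFn (α : ℝ) (w z : ℂ) : ℂ :=
  ((1 - ‖w‖ ^ 2 : ℝ) : ℂ) * (1 - conj w * z) ^ ((-α : ℝ) : ℂ)

lemma one_sub_norm_mul_norm_le_norm_one_sub_conj_mul (w z : ℂ) :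
    1 - ‖w‖ * ‖z‖ ≤ ‖1 - conj w * z‖ := by
  simpa [Complex.norm_conj] using norm_sub_norm_le (1 : ℂ) (conj w * z)

lemma one_sub_conj_mul_mem_slitPlane (hw : w ∈ unitDisk) (hz : z ∈ unitDisk) :
    1 - conj w * z ∈ slitPlane := by
  refine Or.inl ?_
  have hlt : ‖conj w * z‖ < 1 := by
    rw [norm_mul, Complex.norm_conj]
    exact mul_lt_one_of_nonneg_of_lt_one_left (norm_nonneg w) (mem_unitDisk.1 hw)
      (mem_unitDisk.1 hz).le
  rw [sub_re, one_re]
  linarith [re_le_norm (conj w * z)]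

lemma hasDerivAt_blochTestFn (hw : w ∈ unitDisk) (hz : z ∈ unitDisk) :
    HasDerivAt (blochTestFn α w) (((1 - ‖w‖ ^ 2 : ℝ) : ℂ) *
      (((-α : ℝ) : ℂ) * (1 - conj w * z) ^ (((-α : ℝ) : ℂ) - 1) * -conj w)) z := by
  have hu : HasDerivAt (fun z => 1 - conj w * z) (-conj w) z := by
    simpa using ((hasDerivAt_id z).const_mul (conj w)).const_sub 1
  exact (hu.cpow_const (one_sub_conj_mul_mem_slitPlane hw hz)).const_mul _

lemma differentiableOn_blochTestFn (hw : w ∈ unitDisk) :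
    DifferentiableOn ℂ (blochTestFn α w) unitDisk := fun _ hz =>
  (hasDerivAt_blochTestFn hw hz).differentiableAt.differentiableWithinAt

lemma norm_deriv_blochTestFn (hα : 0 ≤ α) (hw : w ∈ unitDisk) (hz : z ∈ unitDisk) :
    ‖deriv (blochTestFn α w) z‖ =
      α * ‖w‖ * (1 - ‖w‖ ^ 2) / ‖1 - conj w * z‖ ^ (α + 1) := by
  have hexp : ((-α : ℝ) : ℂ) - 1 = ((-(α + 1) : ℝ) : ℂ) := by push_cast; ring
  rw [(hasDerivAt_blochTestFn hw hz).deriv, hexp, norm_mul, norm_mul, norm_mul, norm_neg,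
    norm_cpow_real, Real.rpow_neg (norm_nonneg _), Complex.norm_conj, Complex.norm_real,
    Complex.norm_real, Real.norm_of_nonneg (one_sub_norm_sq_pos hw).le, norm_neg,
    Real.norm_of_nonneg hα]
  field_simp

lemma norm_blochTestFn_zero_le_one (hw : w ∈ unitDisk) : ‖blochTestFn α w 0‖ ≤ 1 := by
  rw [blochTestFn, mul_zero, sub_zero, one_cpow, mul_one, Complex.norm_real,
    Real.norm_of_nonneg (one_sub_norm_sq_pos hw).le]
  linarith [sq_nonneg ‖w‖]

lemma weight_blochTestFn_le (hα : 0 ≤ α) (hw : w ∈ unitDisk) (hz : z ∈ unitDisk) :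
    weight α (blochTestFn α w) z ≤ α * 2 ^ (α + 1) := by
  set u := ‖1 - conj w * z‖
  have hw1 := mem_unitDisk.1 hw
  have hz1 := mem_unitDisk.1 hz
  have hu := one_sub_norm_mul_norm_le_norm_one_sub_conj_mul w z
  have hwu : 1 - ‖w‖ ≤ u := by nlinarith [norm_nonneg w, norm_nonneg z]
  have hupos : 0 < u := by linarith
  have hzu : 1 - ‖z‖ ^ 2 ≤ 2 * u := by nlinarith [norm_nonneg w, norm_nonneg z]
  have hwu' : ‖w‖ * (1 - ‖w‖ ^ 2) ≤ 2 * u := by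
    have : ‖w‖ * (1 + ‖w‖) ≤ 2 := by nlinarith [norm_nonneg w]
    nlinarith [mul_le_mul_of_nonneg_left this (sub_nonneg.2 hw1.le)]
  rw [weight_eq_of_differentiableAt (hasDerivAt_blochTestFn hw hz).differentiableAt,
    norm_deriv_blochTestFn hα hw hz]
  calc (1 - ‖z‖ ^ 2) ^ α * (α * ‖w‖ * (1 - ‖w‖ ^ 2) / u ^ (α + 1))
      ≤ (2 * u) ^ α * (α * (2 * u) / u ^ (α + 1)) := by
        have := one_sub_norm_sq_pos hw
        rw [mul_assoc α]
        gcongr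
        exact (one_sub_norm_sq_pos hz).le
    _ = α * 2 ^ (α + 1) := by
        rw [Real.mul_rpow zero_le_two hupos.le, Real.rpow_add_one two_ne_zero,
          Real.rpow_add_one hupos.ne']
        field_simp

lemma weight_blochTestFn_self (hα : 0 ≤ α) (hw : w ∈ unitDisk) :
    weight α (blochTestFn α w) w = α * ‖w‖ := by
  have hpos := one_sub_norm_sq_pos hw
  have hu : ‖1 - conj w * w‖ = 1 - ‖w‖ ^ 2 := by
    rw [mul_comm, mul_conj', ← ofReal_pow, ← ofReal_one, ← ofReal_sub, Complex.norm_real,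
      Real.norm_of_nonneg hpos.le]
  rw [weight_eq_of_differentiableAt (hasDerivAt_blochTestFn hw hw).differentiableAt,
    norm_deriv_blochTestFn hα hw hw, hu, Real.rpow_add_one hpos.ne']
  field_simp

lemma memHB0_blochTestFn (hα : 0 < α) (hw : w ∈ unitDisk) : memHB0 α (blochTestFn α w) := by
  have hw1 := mem_unitDisk.1 hw
  refine memHB0_of_norm_deriv_le hα (differentiableOn_blochTestFn hw)
    (D := α * ‖w‖ * (1 - ‖w‖ ^ 2) / (1 - ‖w‖) ^ (α + 1)) fun z hz => ?_
  have hu := one_sub_norm_mul_norm_le_norm_one_sub_conj_mul w z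
  rw [norm_deriv_blochTestFn hα.le hw hz]
  have := one_sub_norm_sq_pos hw
  gcongr
  nlinarith [norm_nonneg w, norm_nonneg z, mem_unitDisk.1 hz]

lemma HBnorm_blochTestFn_le (hα : 0 < α) (hw : w ∈ unitDisk) :
    HBnorm α (blochTestFn α w) ≤ 1 + α * 2 ^ (α + 1) :=
  add_le_add (norm_blochTestFn_zero_le_one hw)
    (semiNorm_le fun _ hz => weight_blochTestFn_le hα.le hw hz)

end TestFunction

section CompositionOperator

variable {α : ℝ} {φ : ℂ → ℂ}

lemma tau_bounded_of_comp_bounded (hα : 0 < α) (hφd : DifferentiableOn ℂ φ unitDisk)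
    (hφm : MapsTo φ unitDisk unitDisk) {C : ℝ} (hC : 0 ≤ C)
    (hbdd : ∀ f, memHB0 α f → memHB0 α (f ∘ φ) ∧ HBnorm α (f ∘ φ) ≤ C * HBnorm α f) :
    ∃ M : ℝ, ∀ z ∈ unitDisk, tau α φ z ≤ M := by
  obtain ⟨B, hB⟩ := (hbdd id (memHB0_id hα)).1.1.2
  set K := 1 + α * 2 ^ (α + 1)
  refine ⟨max (B / (3 / 4) ^ α) (2 * (C * K) / α), fun z hz => ?_⟩
  have hφz := hφm hz
  have hφ := hφd.differentiableAt (isOpen_unitDisk.mem_nhds hz)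
  rcases le_or_gt ‖φ z‖ (1 / 2) with hsmall | hlarge
  · refine le_max_of_le_left ?_
    rw [tau_eq_weight_div hφ]
    have hweight : weight α φ z ≤ B := hB (mem_image_of_mem _ hz)
    exact div_le_div₀ ((weight_nonneg hz).trans hweight) hweight (by positivity)
      (Real.rpow_le_rpow (by norm_num) (by nlinarith [norm_nonneg (φ z)]) hα.le)
  · refine le_max_of_le_right ?_
    have htest := hbdd _ (memHB0_blochTestFn hα hφz)
    have hkey : tau α φ z * (α * ‖φ z‖) ≤ C * K :=
      calc tau α φ z * (α * ‖φ z‖) = weight α (blochTestFn α (φ z) ∘ φ) z := by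
            rw [weight_comp (differentiableOn_blochTestFn hφz |>.differentiableAt
              (isOpen_unitDisk.mem_nhds hφz) |>.restrictScalars ℝ) hφ hφz,
              weight_blochTestFn_self hα.le hφz]
        _ ≤ HBnorm α (blochTestFn α (φ z) ∘ φ) :=
            (weight_le_semiNorm htest.1.1.2 hz).trans (le_add_of_nonneg_left (norm_nonneg _))
        _ ≤ C * K := htest.2.trans (by gcongr; exact HBnorm_blochTestFn_le hα hφz)
    rw [le_div_iff₀ hα]
    nlinarith [mul_nonneg (mul_nonneg (tau_nonneg (α := α) hz hφz) hα.le) (sub_nonneg.2 hlarge.le)]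

lemma nonneg_of_forall_tau_le (hφm : MapsTo φ unitDisk unitDisk) {M : ℝ}
    (hM : ∀ z ∈ unitDisk, tau α φ z ≤ M) : 0 ≤ M :=
  (tau_nonneg zero_mem_unitDisk (hφm zero_mem_unitDisk)).trans (hM 0 zero_mem_unitDisk)

lemma weight_comp_le_mul_semiNorm (hφd : DifferentiableOn ℂ φ unitDisk)
    (hφm : MapsTo φ unitDisk unitDisk) {M : ℝ} (hM : ∀ z ∈ unitDisk, tau α φ z ≤ M)
    {f : ℂ → ℂ} (hf : memHB α f) {z : ℂ} (hz : z ∈ unitDisk) :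
    weight α (f ∘ φ) z ≤ M * semiNorm α f := by
  rw [weight_comp (hf.1.differentiableAt (hφm hz))
    (hφd.differentiableAt (isOpen_unitDisk.mem_nhds hz)) (hφm hz)]
  exact mul_le_mul (hM z hz) (weight_le_semiNorm hf.2 (hφm hz)) (weight_nonneg (hφm hz))
    (nonneg_of_forall_tau_le hφm hM)

lemma memHB_comp (hφd : DifferentiableOn ℂ φ unitDisk) (hφm : MapsTo φ unitDisk unitDisk)
    {M : ℝ} (hM : ∀ z ∈ unitDisk, tau α φ z ≤ M) {f : ℂ → ℂ} (hf : memHB α f) :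
    memHB α (f ∘ φ) :=
  ⟨hf.1.comp hφd hφm, M * semiNorm α f,
    forall_mem_image.2 fun _ hz => weight_comp_le_mul_semiNorm hφd hφm hM hf hz⟩

lemma exists_HBnorm_comp_le (hα : 0 ≤ α) (hφd : DifferentiableOn ℂ φ unitDisk)
    (hφm : MapsTo φ unitDisk unitDisk) {M : ℝ} (hM : ∀ z ∈ unitDisk, tau α φ z ≤ M) :
    ∃ C > 0, ∀ f, memHB α f → HBnorm α (f ∘ φ) ≤ C * HBnorm α f := by
  have hφ0 := hφm zero_mem_unitDisk
  set K := ‖φ 0‖ / (1 - ‖φ 0‖ ^ 2) ^ α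
  have hK : 0 ≤ K := div_nonneg (norm_nonneg _) (Real.rpow_nonneg (one_sub_norm_sq_pos hφ0).le α)
  have hM0 := nonneg_of_forall_tau_le hφm hM
  refine ⟨1 + K + M, by positivity, fun f hf => ?_⟩
  have hvalue : ‖f (φ 0)‖ ≤ ‖f 0‖ + K * semiNorm α f := by
    have hK' : semiNorm α f / (1 - ‖φ 0‖ ^ 2) ^ α * ‖φ 0‖ = K * semiNorm α f := by ring
    linarith [hf.1.norm_sub_le hα hf.2 hφ0, norm_sub_norm_le (f (φ 0)) (f 0)]
  have hsemi : semiNorm α (f ∘ φ) ≤ M * semiNorm α f :=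
    semiNorm_le fun _ hz => weight_comp_le_mul_semiNorm hφd hφm hM hf hz
  have := semiNorm_nonneg hf.2
  have := norm_nonneg (f 0)
  rw [HBnorm, HBnorm, Function.comp_apply]
  nlinarith

lemma littleOh_comp (hα : 0 ≤ α) (hφd : DifferentiableOn ℂ φ unitDisk)
    (hφm : MapsTo φ unitDisk unitDisk)
    (hφ : ∀ ε > 0, ∃ r < (1 : ℝ), ∀ z ∈ unitDisk, r < ‖z‖ → (1 - ‖z‖ ^ 2) ^ α * ‖deriv φ z‖ < ε)
    {M : ℝ} (hM : ∀ z ∈ unitDisk, tau α φ z ≤ M) {f : ℂ → ℂ} (hf : memHB0 α f) :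
    littleOh α (f ∘ φ) := by
  have hM0 := nonneg_of_forall_tau_le hφm hM
  intro ε hε
  obtain ⟨ρ, hρ, hfρ⟩ := hf.2 (ε / (M + 1)) (by positivity)
  obtain ⟨B, hB⟩ := hf.1.2
  have hρ' : 0 < 1 - max ρ 0 ^ 2 := by nlinarith [le_max_right ρ 0, max_lt hρ one_pos]
  set c := (1 - max ρ 0 ^ 2) ^ α
  have hc : 0 < c := Real.rpow_pos_of_pos hρ' α
  have hB0 : 0 ≤ B :=
    (weight_nonneg zero_mem_unitDisk).trans (hB (mem_image_of_mem _ zero_mem_unitDisk))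
  obtain ⟨r, hr, hφr⟩ := hφ (ε * c / (B + 1)) (by positivity)
  refine ⟨r, hr, fun z hz hrz => ?_⟩
  have hφz := hφm hz
  have hφ := hφd.differentiableAt (isOpen_unitDisk.mem_nhds hz)
  rw [weight_comp (hf.1.1.differentiableAt hφz) hφ hφz]
  rcases lt_or_ge ρ ‖φ z‖ with hnear | hfar
  · calc tau α φ z * weight α f (φ z) ≤ M * (ε / (M + 1)) :=
          mul_le_mul (hM z hz) (hfρ _ hφz hnear).le (weight_nonneg hφz) hM0
      _ < ε := by rw [mul_div_assoc', div_lt_iff₀ (by positivity)]; nlinarith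
  · have hcφ : c ≤ (1 - ‖φ z‖ ^ 2) ^ α := by
      refine Real.rpow_le_rpow hρ'.le ?_ hα
      nlinarith [norm_nonneg (φ z), le_max_left ρ 0]
    calc tau α φ z * weight α f (φ z)
        = (1 - ‖z‖ ^ 2) ^ α * ‖deriv φ z‖ * (weight α f (φ z) / (1 - ‖φ z‖ ^ 2) ^ α) := by
          rw [tau]; ring
      _ ≤ ε * c / (B + 1) * (B / c) := by
          refine mul_le_mul (hφr z hz hrz).le
            (div_le_div₀ hB0 (hB (mem_image_of_mem _ hφz)) hc hcφ) ?_ (by positivity)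
          exact div_nonneg (weight_nonneg hφz) (Real.rpow_nonneg (one_sub_norm_sq_pos hφz).le α)
      _ < ε := by
          rw [show ε * c / (B + 1) * (B / c) = ε * (B / (B + 1)) by field_simp]
          exact mul_lt_of_lt_one_right hε ((div_lt_one (by positivity)).2 (by linarith))

end CompositionOperator

/-- C_φ : HB₀(α) → HB₀(α) is bounded iff φ ∈ B₀(α) and
sup_{z∈D} (1-|z|²)^α|φ'(z)|/(1-|φ(z)|²)^α < ∞. -/
theorem comp_bounded_HB0_HB0_iff (α : ℝ) (hα : 0 < α) (φ : ℂ → ℂ)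
    (hφd : DifferentiableOn ℂ φ unitDisk) (hφm : MapsTo φ unitDisk unitDisk) :
    (∃ C > 0, ∀ f, memHB0 α f → memHB0 α (f ∘ φ) ∧ HBnorm α (f ∘ φ) ≤ C * HBnorm α f) ↔
      ((∀ ε > 0, ∃ r < (1:ℝ), ∀ z ∈ unitDisk, r < ‖z‖ →
          (1 - ‖z‖ ^ 2) ^ α * ‖deriv φ z‖ < ε) ∧
        ∃ M : ℝ, ∀ z ∈ unitDisk, tau α φ z ≤ M) := by
  constructor
  · rintro ⟨C, hC, hbdd⟩
    refine ⟨fun ε hε => ?_, tau_bounded_of_comp_bounded hα hφd hφm hC.le hbdd⟩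
    obtain ⟨r, hr, hlt⟩ := (hbdd id (memHB0_id hα)).1.2 ε hε
    refine ⟨r, hr, fun z hz hrz => ?_⟩
    rw [← weight_eq_of_differentiableAt (hφd.differentiableAt (isOpen_unitDisk.mem_nhds hz))]
    exact hlt z hz hrz
  · rintro ⟨hφ, M, hM⟩
    obtain ⟨C, hC, hnorm⟩ := exists_HBnorm_comp_le hα.le hφd hφm hM
    exact ⟨C, hC, fun f hf =>
      ⟨⟨memHB_comp hφd hφm hM hf.1, littleOh_comp hα.le hφd hφm hφ hM hf⟩, hnorm f hf.1⟩⟩
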